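/- In a one-to-one matching market with strict preferences on both sides, the matching produced by player-proposing deferred acceptance is stable: no player–arm pair (p, a) exists such that p prefers a to its assigned partner and a prefers p to its assigned partner, and no matched agent prefers being unmatched. -/
import Mathlib


open Finset

/-- Some element of `S` minimizing `r` (or `none` if `S` is empty). -/
noncomputable def argminOf {α : Type*} (S : Finset α) (r : α → ℕ) : Option α :=
  if h : S.Nonempty then some (S.exists_min_image r h).choose else none

/-- One round of the player-proposing deferred acceptance algorithm (one-to-one market):
the state records, for each player, the set of arms that have rejected it so far.
Preferences are strict: lower rank value = more preferred, ranks injective. -/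
noncomputable def daStep {N K : ℕ} (pRank : Fin N → Fin K → ℕ) (aRank : Fin K → Fin N → ℕ)
    (rej : Fin N → Finset (Fin K)) : Fin N → Finset (Fin K) := fun p =>
  match argminOf (Finset.univ \ rej p) (pRank p) with
  | none => rej p
  | some a =>
      if argminOf (Finset.univ.filter
            (fun q : Fin N => argminOf (Finset.univ \ rej q) (pRank q) = some a)) (aRank a)
          = some p then
        rej p
      else insert a (rej p)

lemma argminOf_spec {α : Type*} {S : Finset α} {r : α → ℕ} {x : α}
    (h : argminOf S r = some x) : x ∈ S ∧ ∀ y ∈ S, r x ≤ r y := by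
  unfold argminOf at h
  split_ifs at h with hS
  obtain ⟨h1, h2⟩ := (S.exists_min_image r hS).choose_spec
  injection h with h; subst h; exact ⟨h1, h2⟩

lemma argminOf_isSome {α : Type*} {S : Finset α} (r : α → ℕ) (hS : S.Nonempty) :
    ∃ x, argminOf S r = some x := by
  unfold argminOf; rw [dif_pos hS]; exact ⟨_, rfl⟩

lemma argminOf_eq_none {α : Type*} {S : Finset α} {r : α → ℕ}
    (h : argminOf S r = none) : S = ∅ := by
  unfold argminOf at h
  split_ifs at h with hS
  exact not_nonempty_iff_eq_empty.mp hS

section DA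
variable {N K : ℕ} (pRank : Fin N → Fin K → ℕ) (aRank : Fin K → Fin N → ℕ)

/-- Current proposal target of player `p`. -/
noncomputable def top (rej : Fin N → Finset (Fin K)) (p : Fin N) : Option (Fin K) :=
  argminOf (Finset.univ \ rej p) (pRank p)

/-- The player currently held by arm `a`. -/
noncomputable def hold (rej : Fin N → Finset (Fin K)) (a : Fin K) : Option (Fin N) :=
  argminOf (Finset.univ.filter (fun q : Fin N => top pRank rej q = some a)) (aRank a)

lemma daStep_eq (rej : Fin N → Finset (Fin K)) (p : Fin N) :
    daStep pRank aRank rej p =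
      match top pRank rej p with
      | none => rej p
      | some a => if hold pRank aRank rej a = some p then rej p else insert a (rej p) := rfl

lemma hold_spec {rej : Fin N → Finset (Fin K)} {a : Fin K} {q : Fin N}
    (h : hold pRank aRank rej a = some q) :
    top pRank rej q = some a ∧
      ∀ q', top pRank rej q' = some a → aRank a q ≤ aRank a q' := by
  obtain ⟨h1, h2⟩ := argminOf_spec h
  refine ⟨(mem_filter.mp h1).2, fun q' hq' => h2 q' ?_⟩
  exact mem_filter.mpr ⟨mem_univ _, hq'⟩

/-- A held player keeps its rejection set unchanged. -/
lemma held_stays {rej : Fin N → Finset (Fin K)} {a : Fin K} {q : Fin N}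
    (h : hold pRank aRank rej a = some q) :
    daStep pRank aRank rej q = rej q := by
  have ht := (hold_spec pRank aRank h).1
  rw [daStep_eq, ht]
  simp [h]

/-- Arms' held players only improve. -/
lemma hold_improves {rej : Fin N → Finset (Fin K)} {a : Fin K} {q : Fin N}
    (h : hold pRank aRank rej a = some q) :
    ∃ q', hold pRank aRank (daStep pRank aRank rej) a = some q' ∧
      aRank a q' ≤ aRank a q := by
  have hstay := held_stays pRank aRank h
  have ht : top pRank (daStep pRank aRank rej) q = some a := by
    unfold top; rw [hstay]; exact (hold_spec pRank aRank h).1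
  have hmem : q ∈ Finset.univ.filter
      (fun r : Fin N => top pRank (daStep pRank aRank rej) r = some a) :=
    mem_filter.mpr ⟨mem_univ _, ht⟩
  obtain ⟨q', hq'⟩ := argminOf_isSome (aRank a) ⟨q, hmem⟩
  exact ⟨q', hq', (argminOf_spec hq').2 q hmem⟩

/-- If `p` proposes to `a` but is not held, the held player is strictly better. -/
lemma rejected_worse (ha : ∀ a, Function.Injective (aRank a))
    {rej : Fin N → Finset (Fin K)} {a : Fin K} {p : Fin N}
    (ht : top pRank rej p = some a) (hnh : hold pRank aRank rej a ≠ some p) :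
    ∃ q, hold pRank aRank rej a = some q ∧ aRank a q < aRank a p := by
  have hmem : p ∈ Finset.univ.filter (fun r : Fin N => top pRank rej r = some a) :=
    mem_filter.mpr ⟨mem_univ _, ht⟩
  obtain ⟨q, hq⟩ := argminOf_isSome (aRank a) ⟨p, hmem⟩
  refine ⟨q, hq, lt_of_le_of_ne ((argminOf_spec hq).2 p hmem) ?_⟩
  intro heq
  exact hnh (by rwa [ha a heq] at hq)

/-- Invariant: any arm that rejected `p` holds someone better than `p`. -/
def DAInv (rej : Fin N → Finset (Fin K)) : Prop :=
  ∀ p a, a ∈ rej p →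
    ∃ q, hold pRank aRank rej a = some q ∧ aRank a q < aRank a p

lemma inv_step (ha : ∀ a, Function.Injective (aRank a))
    {rej : Fin N → Finset (Fin K)} (hI : DAInv pRank aRank rej) :
    DAInv pRank aRank (daStep pRank aRank rej) := by
  intro p a hmem
  have key : ∀ q, hold pRank aRank rej a = some q → aRank a q < aRank a p →
      ∃ q', hold pRank aRank (daStep pRank aRank rej) a = some q' ∧
        aRank a q' < aRank a p := by
    intro q hq hlt
    obtain ⟨q', hq', hle⟩ := hold_improves pRank aRank hq
    exact ⟨q', hq', lt_of_le_of_lt hle hlt⟩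
  have old : a ∈ rej p →
      ∃ q', hold pRank aRank (daStep pRank aRank rej) a = some q' ∧
        aRank a q' < aRank a p := by
    intro hm
    obtain ⟨q, hq, hlt⟩ := hI p a hm
    exact key q hq hlt
  rw [daStep_eq] at hmem
  rcases htop : top pRank rej p with _ | b
  · rw [htop] at hmem; exact old hmem
  · rw [htop] at hmem
    have hmem' : a ∈ (if hold pRank aRank rej b = some p then rej p
        else insert b (rej p)) := hmem
    by_cases hh : hold pRank aRank rej b = some p
    · rw [if_pos hh] at hmem'; exact old hmem'
    · rw [if_neg hh] at hmem'
      rcases mem_insert.mp hmem' with hab | hm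
      · subst hab
        obtain ⟨q, hq, hlt⟩ := rejected_worse pRank aRank ha htop hh
        exact key q hq hlt
      · exact old hm

end DA

/-- the matching produced by player-proposing deferred acceptance (the
assignment `matched` read off at a terminal, i.e. fixed-point, state reached from the
initial state) is stable: there is no player–arm pair `(p, a)` not matched together such
that `p` prefers `a` to its assigned partner (or is unmatched) and `a` prefers `p` to its
assigned partner (or is unmatched); being matched is always preferred to being
unmatched. -/
theorem da_stable {N K : ℕ}
    (pRank : Fin N → Fin K → ℕ) (aRank : Fin K → Fin N → ℕ)
    (hp : ∀ p, Function.Injective (pRank p)) (ha : ∀ a, Function.Injective (aRank a))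
    (τ : ℕ) (rej : Fin N → Finset (Fin K))
    (hreach : rej = (daStep pRank aRank)^[τ] (fun _ => (∅ : Finset (Fin K))))
    (hfix : Function.IsFixedPt (daStep pRank aRank) rej)
    (matched : Fin N → Option (Fin K))
    (hmatched : ∀ p, matched p = argminOf (Finset.univ \ rej p) (pRank p)) :
    ¬ ∃ (p : Fin N) (a : Fin K),
        matched p ≠ some a ∧
        (∀ b, matched p = some b → pRank p a < pRank p b) ∧
        (∀ q, matched q = some a → aRank a p < aRank a q) := by
  rintro ⟨p, a, hne, hpb, haq⟩
  have hmtop : ∀ q, matched q = top pRank rej q := fun q => hmatched q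
  -- the invariant holds at `rej`
  have hInv : DAInv pRank aRank rej := by
    rw [hreach]
    clear hreach hfix hmatched hmtop hne hpb haq
    induction τ with
    | zero => intro p a hmem; simp at hmem
    | succ n ih =>
        rw [Function.iterate_succ_apply']
        exact inv_step pRank aRank ha ih
  -- `a` has rejected `p`
  have hrej : a ∈ rej p := by
    rcases hmp : matched p with _ | b
    · have := argminOf_eq_none (hmp ▸ (hmatched p).symm)
      by_contra hna
      have : a ∈ Finset.univ \ rej p := mem_sdiff.mpr ⟨mem_univ _, hna⟩
      rw [‹Finset.univ \ rej p = ∅›] at this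
      exact absurd this (notMem_empty a)
    · have hb := argminOf_spec ((hmatched p) ▸ hmp)
      by_contra hna
      have hmem : a ∈ Finset.univ \ rej p := mem_sdiff.mpr ⟨mem_univ _, hna⟩
      exact absurd (hb.2 a hmem) (not_le.mpr (hpb b hmp))
  -- so `a` holds someone strictly better than `p`
  obtain ⟨q, hq, hlt⟩ := hInv p a hrej
  have hqa : matched q = some a := by
    rw [hmtop q]; exact (hold_spec pRank aRank hq).1
  exact absurd (haq q hqa) (not_lt.mpr (le_of_lt hlt))
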